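/- arXiv:2605.22990 — 2 statements merged into one kernel-verified Lean document; each statement's English description precedes it below -/
import Mathlib

section
/- The kernelized drifting field is SE(3)-equivariant: for every g = (R, t) ∈ SE(3) acting atom-wise on configurations, all p, q ∈ P(M), and every X ∈ M, V_{g♯p, g♯q}(g·X) = R · V_{p,q}(X), where V_{p,q}(X) = V_p(X) − V_q(X) with V_μ(X) = (1/Z_μ(X)) ∫_M k(X,Y)(Y − X) dμ(Y), and R acts atom-wise (block-diagonally) without translation on the displacement vector. -/
/-!
STATEMENT 6: The kernelized drifting field `V_{p,q}(X) = V_p(X) − V_q(X)` is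
SE(3)-equivariant: for every `g = (R, t) ∈ SE(3)` acting atom-wise on
configurations, all `p, q ∈ P(M)`, and every `X ∈ M`,
`V_{g♯p, g♯q}(g·X) = R · V_{p,q}(X)`, where `R` acts atom-wise
(block-diagonally) without translation on the displacement vector.
-/

open MeasureTheory Matrix

noncomputable section

/-- The molecular configuration space `M = ℝ^{3N}` for `N` atoms, with the
Euclidean norm (coordinates indexed by atom `n` and spatial axis `i`). -/
abbrev Conf (N : ℕ) := EuclideanSpace ℝ (Fin N × Fin 3)

/-- Membership in `P(M)`: Borel probability measures absolutely continuous with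
respect to Lebesgue measure. -/
def IsProbAC {N : ℕ} (μ : Measure (Conf N)) : Prop :=
  IsProbabilityMeasure μ ∧ μ ≪ volume

/-- The exponential kernel `k(X,Y) = exp(−‖X−Y‖/τ)`. -/
def kern {N : ℕ} (τ : ℝ) (X Y : Conf N) : ℝ := Real.exp (-‖X - Y‖ / τ)

/-- The partition function `Z_μ(X) = ∫ k(X,Y) dμ(Y)`. -/
def Zpart {N : ℕ} (τ : ℝ) (μ : Measure (Conf N)) (X : Conf N) : ℝ :=
  ∫ Y, kern τ X Y ∂μ

/-- The kernel-weighted mean-shift vector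
`V_μ(X) = (1/Z_μ(X)) ∫ k(X,Y)(Y − X) dμ(Y)`. -/
def meanShift {N : ℕ} (τ : ℝ) (μ : Measure (Conf N)) (X : Conf N) : Conf N :=
  (Zpart τ μ X)⁻¹ • ∫ Y, kern τ X Y • (Y - X) ∂μ

/-- The kernelized drifting field `V_{p,q}(X) = V_p(X) − V_q(X)`. -/
def drift {N : ℕ} (τ : ℝ) (p q : Measure (Conf N)) (X : Conf N) : Conf N :=
  meanShift τ p X - meanShift τ q X

/-- Atom-wise rigid motion: `(g·X)⁽ⁿ⁾ = R x⁽ⁿ⁾ + t` for `g = (R, t)`. -/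
def act {N : ℕ} (R : Matrix (Fin 3) (Fin 3) ℝ) (t : Fin 3 → ℝ) (X : Conf N) : Conf N :=
  WithLp.toLp 2 (fun p : Fin N × Fin 3 => (∑ j, R p.2 j * X (p.1, j)) + t p.2)

/-- Atom-wise (block-diagonal) rotation without translation, acting on
displacement vectors. -/
def rotOnly {N : ℕ} (R : Matrix (Fin 3) (Fin 3) ℝ) (v : Conf N) : Conf N :=
  WithLp.toLp 2 (fun p : Fin N × Fin 3 => ∑ j, R p.2 j * v (p.1, j))

/-!
An atom-wise rigid motion `g = (R, t)` is an affine isometry of `M` whose linear part is the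
block-diagonal matrix `1 ⊗ₖ R`, orthogonal as a Kronecker product of orthogonal matrices. The kernel
depends only on distances, so it is `g`-invariant, and after the change of variables `Y ↦ g·Y` the
displacement `g·Y − g·X` is the linear part applied to `Y − X`, which commutes with the Bochner
integral and with the scalar `1/Z`.
-/

open scoped Kronecker

lemma rotOnly_eq_toEuclideanCLM {N : ℕ} (R : Matrix (Fin 3) (Fin 3) ℝ) (v : Conf N) :
    rotOnly R v = toEuclideanCLM (𝕜 := ℝ) ((1 : Matrix (Fin N) (Fin N) ℝ) ⊗ₖ R) v := by
  ext ⟨n, i⟩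
  simp [rotOnly, mulVec, dotProduct, Fintype.sum_prod_type, one_apply, ite_mul,
    Finset.sum_ite_eq]

lemma norm_rotOnly {N : ℕ} {R : Matrix (Fin 3) (Fin 3) ℝ}
    (hR : R ∈ orthogonalGroup (Fin 3) ℝ) (v : Conf N) : ‖rotOnly R v‖ = ‖v‖ := by
  rw [rotOnly_eq_toEuclideanCLM]
  exact ContinuousLinearMap.norm_map_of_mem_unitary
    (Unitary.map_mem _ (kronecker_mem_unitary (one_mem _) hR)) v

lemma act_add {N : ℕ} (R : Matrix (Fin 3) (Fin 3) ℝ) (t : Fin 3 → ℝ) (v X : Conf N) :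
    act R t (v + X) = rotOnly R v + act R t X := by
  ext p
  simp only [act, rotOnly, PiLp.add_apply, mul_add, Finset.sum_add_distrib]
  ring

def rigidMotion {N : ℕ} {R : Matrix (Fin 3) (Fin 3) ℝ} (hR : R ∈ orthogonalGroup (Fin 3) ℝ)
    (t : Fin 3 → ℝ) : Conf N →ᵃⁱ[ℝ] Conf N where
  toFun := act R t
  linear := toEuclideanCLM (𝕜 := ℝ) ((1 : Matrix (Fin N) (Fin N) ℝ) ⊗ₖ R)
  map_vadd' v X := by
    simp only [vadd_eq_add, act_add, rotOnly_eq_toEuclideanCLM]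
    rfl
  norm_map v := by
    rw [← norm_rotOnly hR v, rotOnly_eq_toEuclideanCLM]
    rfl

@[simp]
lemma coe_rigidMotion {N : ℕ} {R : Matrix (Fin 3) (Fin 3) ℝ}
    (hR : R ∈ orthogonalGroup (Fin 3) ℝ) (t : Fin 3 → ℝ) :
    ⇑(rigidMotion (N := N) hR t) = act R t := rfl

@[simp]
lemma linearIsometry_rigidMotion_apply {N : ℕ} {R : Matrix (Fin 3) (Fin 3) ℝ}
    (hR : R ∈ orthogonalGroup (Fin 3) ℝ) (t : Fin 3 → ℝ) (v : Conf N) :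
    (rigidMotion hR t).linearIsometry v = rotOnly R v :=
  (rotOnly_eq_toEuclideanCLM R v).symm

section AffineIsometry

variable {N : ℕ} (τ : ℝ) (g : Conf N →ᵃⁱ[ℝ] Conf N)

lemma kern_map_map (X Y : Conf N) : kern τ (g X) (g Y) = kern τ X Y := by
  simp only [kern, ← dist_eq_norm, g.dist_map]

lemma Zpart_map (μ : Measure (Conf N)) (X : Conf N) :
    Zpart τ (μ.map g) (g X) = Zpart τ μ X := by
  rw [Zpart, g.isometry.isClosedEmbedding.measurableEmbedding.integral_map]
  simp only [kern_map_map, Zpart]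

lemma integral_kern_smul_sub_map (μ : Measure (Conf N)) (X : Conf N) :
    ∫ Y, kern τ (g X) Y • (Y - g X) ∂(μ.map g)
      = g.linearIsometry (∫ Y, kern τ X Y • (Y - X) ∂μ) := by
  rw [g.isometry.isClosedEmbedding.measurableEmbedding.integral_map,
    ← LinearIsometry.integral_comp_comm]
  congr 1 with Y
  rw [kern_map_map, map_smul, ← vsub_eq_sub, ← vsub_eq_sub, g.map_vsub]

lemma meanShift_map (μ : Measure (Conf N)) (X : Conf N) :
    meanShift τ (μ.map g) (g X) = g.linearIsometry (meanShift τ μ X) := by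
  rw [meanShift, meanShift, Zpart_map, integral_kern_smul_sub_map, map_smul]

lemma drift_map (p q : Measure (Conf N)) (X : Conf N) :
    drift τ (p.map g) (q.map g) (g X) = g.linearIsometry (drift τ p q X) := by
  rw [drift, drift, meanShift_map, meanShift_map, map_sub]

end AffineIsometry

theorem drift_SE3_equivariant_general {N : ℕ} (τ : ℝ)
    (R : Matrix (Fin 3) (Fin 3) ℝ)
    (hR : R ∈ Matrix.orthogonalGroup (Fin 3) ℝ)
    (t : Fin 3 → ℝ) (p q : Measure (Conf N))
    (X : Conf N) :
    drift τ (p.map (act R t)) (q.map (act R t)) (act R t X)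
      = rotOnly R (drift τ p q X) := by
  simpa using drift_map τ (rigidMotion hR t) p q X

/-- SE(3)-equivariance of the kernelized drifting field. -/
theorem drift_SE3_equivariant {N : ℕ} (τ : ℝ) (hτ : 0 < τ)
    (R : Matrix (Fin 3) (Fin 3) ℝ)
    (hR : R ∈ Matrix.orthogonalGroup (Fin 3) ℝ) (hdet : R.det = 1)
    (t : Fin 3 → ℝ) (p q : Measure (Conf N)) (hp : IsProbAC p) (hq : IsProbAC q)
    (X : Conf N) :
    drift τ (p.map (act R t)) (q.map (act R t)) (act R t X)
      = rotOnly R (drift τ p q X) :=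
  drift_SE3_equivariant_general τ R hR t p q X

end
end

section
/- The Kabsch alignment objective transforms by conjugation under a joint rigid motion: for point clouds X, Y ∈ (ℝ³)^M with centroids X̄, Ȳ, define the objective f_{X,Y}(S) = ‖S(X − X̄) + Ȳ − Y‖ for S ∈ SO(3), where S acts point-wise and centroids are broadcast. Then for every g = (R, t) ∈ SE(3) acting point-wise on both X and Y, and every S ∈ SO(3), f_{g·X, g·Y}(R S Rᵀ) = f_{X,Y}(S). Consequently, S₀ ∈ SO(3) minimizes f_{X,Y} over SO(3) if and only if R S₀ Rᵀ minimizes f_{g·X, g·Y} over SO(3). -/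
/-!
A joint rigid motion `g = (R, t)` moves the centroids along with the clouds, since averaging
commutes with affine maps. Hence the residual `(R S Rᵀ)(g·X − g·X̄) + g·Ȳ − g·Y` equals
`R (S (X − X̄) + Ȳ − Y)`, because `Rᵀ R = 1`, and `R` preserves Euclidean norms. Conjugation
by `R` maps `SO(3)` onto itself (conjugation by `Rᵀ` inverts it), so minimizers correspond.
-/

open Matrix

noncomputable section

/-- 3-dimensional Euclidean space. -/
abbrev E3 := EuclideanSpace ℝ (Fin 3)

/-- The special orthogonal group SO(3) as a set of 3×3 real matrices. -/
def SO3 : Set (Matrix (Fin 3) (Fin 3) ℝ) :=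
  {S | S ∈ Matrix.orthogonalGroup (Fin 3) ℝ ∧ S.det = 1}

/-- The centroid of a point cloud: the mean of its `M` points. -/
def centroid {M : ℕ} (X : Fin M → E3) : E3 := (M : ℝ)⁻¹ • ∑ m, X m

/-- The Euclidean norm on point clouds `(ℝ³)^M`. -/
def cloudNorm {M : ℕ} (v : Fin M → E3) : ℝ := Real.sqrt (∑ m, ‖v m‖ ^ 2)

/-- Point-wise rigid motion `(g·X)⁽ᵐ⁾ = R X⁽ᵐ⁾ + t`. -/
def pactc {M : ℕ} (R : Matrix (Fin 3) (Fin 3) ℝ) (t : E3) (X : Fin M → E3) :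
    Fin M → E3 :=
  fun m => Matrix.toEuclideanLin R (X m) + t

/-- The Kabsch alignment objective `f_{X,Y}(S) = ‖S(X − X̄) + Ȳ − Y‖`,
where `S` acts point-wise and centroids are broadcast. -/
def kabschObj {M : ℕ} (X Y : Fin M → E3) (S : Matrix (Fin 3) (Fin 3) ℝ) : ℝ :=
  cloudNorm (fun m => Matrix.toEuclideanLin S (X m - centroid X) + centroid Y - Y m)

theorem Matrix.norm_toEuclideanLin_of_mem_unitaryGroup {𝕜 n : Type*} [RCLike 𝕜] [Fintype n]
    [DecidableEq n] {U : Matrix n n 𝕜} (hU : U ∈ unitaryGroup n 𝕜) (v : EuclideanSpace 𝕜 n) :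
    ‖toEuclideanLin U v‖ = ‖v‖ :=
  (toEuclideanCLM (n := n) (𝕜 := 𝕜) U).norm_map_of_mem_unitary (Unitary.map_mem _ hU) v

section Conjugation

variable {n : Type*} [Fintype n] [DecidableEq n] {R : Matrix n n ℝ}

theorem Matrix.transpose_mem_orthogonalGroup (hR : R ∈ orthogonalGroup n ℝ) :
    Rᵀ ∈ orthogonalGroup n ℝ := by
  rw [mem_orthogonalGroup_iff, transpose_transpose]
  exact (mem_orthogonalGroup_iff' _ _).mp hR

theorem mapsTo_conj_specialOrthogonalGroup (hR : R ∈ orthogonalGroup n ℝ) :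
    Set.MapsTo (fun S => R * S * Rᵀ)
      (specialOrthogonalGroup n ℝ) (specialOrthogonalGroup n ℝ) := by
  intro S hS
  rw [SetLike.mem_coe, mem_specialOrthogonalGroup_iff] at hS ⊢
  refine ⟨mul_mem (mul_mem hR hS.1) (transpose_mem_orthogonalGroup hR), ?_⟩
  have hdet : R.det * R.det = 1 := by
    simpa using congrArg det ((mem_orthogonalGroup_iff _ _).mp hR)
  rw [det_mul, det_mul, det_transpose, hS.2, mul_one, hdet]

theorem surjOn_conj_specialOrthogonalGroup (hR : R ∈ orthogonalGroup n ℝ) :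
    Set.SurjOn (fun S => R * S * Rᵀ)
      (specialOrthogonalGroup n ℝ) (specialOrthogonalGroup n ℝ) := by
  intro S hS
  refine ⟨Rᵀ * S * R, ?_, ?_⟩
  · simpa using mapsTo_conj_specialOrthogonalGroup (transpose_mem_orthogonalGroup hR) hS
  · have hRRt : R * Rᵀ = 1 := (mem_orthogonalGroup_iff _ _).mp hR
    dsimp only
    rw [← mul_assoc, ← mul_assoc, hRRt, one_mul, mul_assoc, hRRt, mul_one]

end Conjugation

theorem isMinOn_iff_of_mapsTo_of_surjOn {α β γ : Type*} [Preorder β] {f : α → β}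
    {g : γ → β} {φ : α → γ} {s : Set α} {t : Set γ} (hmaps : Set.MapsTo φ s t)
    (hsurj : Set.SurjOn φ s t) (hfg : ∀ x ∈ s, g (φ x) = f x) {a : α} (ha : a ∈ s) :
    IsMinOn f s a ↔ IsMinOn g t (φ a) := by
  simp only [isMinOn_iff]
  constructor
  · intro h y hy
    obtain ⟨x, hx, rfl⟩ := hsurj hy
    rw [hfg a ha, hfg x hx]
    exact h x hx
  · intro h x hx
    rw [← hfg a ha, ← hfg x hx]
    exact h _ (hmaps hx)

theorem SO3_eq_specialOrthogonalGroup : SO3 = specialOrthogonalGroup (Fin 3) ℝ :=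
  Set.ext fun _ => mem_specialOrthogonalGroup_iff.symm

theorem cloudNorm_comp_of_norm_map {M : ℕ} {f : E3 → E3} (hf : ∀ x, ‖f x‖ = ‖x‖)
    (v : Fin M → E3) :
    cloudNorm (fun m => f (v m)) = cloudNorm v := by
  simp only [cloudNorm, hf]

theorem centroid_pactc {M : ℕ} (hM : M ≠ 0) (R : Matrix (Fin 3) (Fin 3) ℝ) (t : E3)
    (X : Fin M → E3) :
    centroid (pactc R t X) = toEuclideanLin R (centroid X) + t := by
  simp only [centroid, pactc, Finset.sum_add_distrib, Finset.sum_const, Finset.card_univ,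
    Fintype.card_fin, smul_add, ← map_sum, ← map_smul, ← Nat.cast_smul_eq_nsmul ℝ,
    smul_smul]
  rw [inv_mul_cancel₀ (Nat.cast_ne_zero.mpr hM), one_smul]

theorem kabschObj_pactc_conj {M : ℕ} {R : Matrix (Fin 3) (Fin 3) ℝ}
    (hR : R ∈ orthogonalGroup (Fin 3) ℝ) (t : E3) (X Y : Fin M → E3)
    (S : Matrix (Fin 3) (Fin 3) ℝ) :
    kabschObj (pactc R t X) (pactc R t Y) (R * S * Rᵀ) = kabschObj X Y S := by
  unfold kabschObj
  conv_rhs => rw [← cloudNorm_comp_of_norm_map (norm_toEuclideanLin_of_mem_unitaryGroup hR)]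
  congr 1
  funext m
  have hM : M ≠ 0 := m.pos.ne'
  have hRSRtR : R * S * Rᵀ * R = R * S := by
    rw [mul_assoc, (mem_orthogonalGroup_iff' _ _).mp hR, mul_one]
  rw [centroid_pactc hM, centroid_pactc hM]
  simp only [pactc, add_sub_add_right_eq_sub, ← map_sub]
  rw [← LinearMap.comp_apply, ← toLpLin_mul_same, hRSRtR, toLpLin_mul_same,
    LinearMap.comp_apply]
  simp only [map_add, map_sub]
  abel

theorem kabschObj_conjugation_general {M : ℕ}
    (R : Matrix (Fin 3) (Fin 3) ℝ)
    (hR : R ∈ Matrix.orthogonalGroup (Fin 3) ℝ)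
    (t : E3) (X Y : Fin M → E3) :
    (∀ S ∈ SO3, kabschObj (pactc R t X) (pactc R t Y) (R * S * Rᵀ)
        = kabschObj X Y S) ∧
    (∀ S₀ ∈ SO3,
      ((∀ S ∈ SO3, kabschObj X Y S₀ ≤ kabschObj X Y S) ↔
        (∀ S ∈ SO3, kabschObj (pactc R t X) (pactc R t Y) (R * S₀ * Rᵀ)
            ≤ kabschObj (pactc R t X) (pactc R t Y) S))) := by
  have hconj := kabschObj_pactc_conj hR t X Y
  refine ⟨fun S _ => hconj S, fun S₀ hS₀ => ?_⟩
  rw [SO3_eq_specialOrthogonalGroup] at hS₀ ⊢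
  simpa only [isMinOn_iff] using
    isMinOn_iff_of_mapsTo_of_surjOn (mapsTo_conj_specialOrthogonalGroup hR)
      (surjOn_conj_specialOrthogonalGroup hR) (fun S _ => hconj S) hS₀

/-- The Kabsch objective transforms by conjugation under a joint rigid motion,
and minimizers correspond by conjugation. -/
theorem kabschObj_conjugation {M : ℕ}
    (R : Matrix (Fin 3) (Fin 3) ℝ)
    (hR : R ∈ Matrix.orthogonalGroup (Fin 3) ℝ) (hdet : R.det = 1)
    (t : E3) (X Y : Fin M → E3) :
    (∀ S ∈ SO3, kabschObj (pactc R t X) (pactc R t Y) (R * S * Rᵀ)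
        = kabschObj X Y S) ∧
    (∀ S₀ ∈ SO3,
      ((∀ S ∈ SO3, kabschObj X Y S₀ ≤ kabschObj X Y S) ↔
        (∀ S ∈ SO3, kabschObj (pactc R t X) (pactc R t Y) (R * S₀ * Rᵀ)
            ≤ kabschObj (pactc R t X) (pactc R t Y) S))) :=
  kabschObj_conjugation_general R hR t X Y

end
end
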